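/- Let (G, Γ) be a Hecke pair and g ∈ G, and define the relation ⇝ on subsets of G by: D ⇝ E if and only if there exist x ∈ G and γ ∈ Γ with D = ΓxΓ and E = Γ(x⁻¹γx)Γ. Suppose that for every sequence (γₖ)_{k ≥ 1} of elements of Γ there exists N ∈ ℕ such that [g, γ₁, …, γ_N] ∈ Γ. Then the set {E ⊆ G : E is reachable from ΓgΓ by the reflexive-transitive closure of ⇝} is finite. -/

import Mathlib

open Pointwise

/-- The commutator `[s,t] = s⁻¹t⁻¹st`. -/
def pcomm {G : Type*} [Group G] (s t : G) : G := s⁻¹ * t⁻¹ * s * t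

/-- The iterated commutator `[g, γ₁, …, γₙ]`. -/
def itComm {G : Type*} [Group G] (g : G) (γ : ℕ → G) : ℕ → G
  | 0 => g
  | n + 1 => pcomm (itComm g γ n) (γ (n + 1))

/-!
If infinitely many double cosets were reachable from `ΓgΓ`, then, since every double coset
`ΓcΓ` has only finitely many successors (they are indexed by the finitely many left cosets in
`ΓcΓ`), a König-type argument gives a successor with infinitely many reachable double cosets.
The successors of `ΓcΓ` are exactly the `Γ[c, δ]Γ` with `δ ∈ Γ`, so iterating produces a
sequence `γₖ ∈ Γ` all of whose iterated commutators `[g, γ₁, …, γₙ]` have infinitely many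
reachable double cosets. But from `Γ = Γ1Γ` only `Γ` itself is reachable, so no
`[g, γ₁, …, γ_N]` lies in `Γ`, contradicting the hypothesis.
-/

namespace Relation

variable {α : Type*} {r : α → α → Prop}

lemma setOf_reflTransGen_subset (a : α) :
    {b | ReflTransGen r a b} ⊆ insert a (⋃ b ∈ {b | r a b}, {c | ReflTransGen r b c}) := by
  intro c hc
  rcases ReflTransGen.cases_head hc with rfl | ⟨b, hab, hbc⟩
  · exact Set.mem_insert _ _
  · exact Or.inr (Set.mem_biUnion hab hbc)

lemma exists_rel_infinite_of_infinite {a : α} (hfin : {b | r a b}.Finite)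
    (hinf : {b | ReflTransGen r a b}.Infinite) :
    ∃ b, r a b ∧ {c | ReflTransGen r b c}.Infinite := by
  by_contra! h
  exact hinf (((hfin.biUnion h).insert a).subset (setOf_reflTransGen_subset a))

end Relation

lemma exists_forall_itComm {G : Type*} [Group G] (S : Set G) (P : G → Prop) {g : G}
    (hg : P g) (hstep : ∀ c, P c → ∃ δ ∈ S, P (pcomm c δ)) :
    ∃ γs : ℕ → G, (∀ k, γs k ∈ S) ∧ ∀ n, P (itComm g γs n) := by
  choose F hFS hFP using hstep
  let seq : ℕ → {c // P c} := fun n => Nat.rec ⟨g, hg⟩ (fun _ c => ⟨_, hFP c.1 c.2⟩) n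
  -- `γs 0` is irrelevant to the iterated commutators; any element of `S` will do.
  refine ⟨fun k => F (seq (k - 1)).1 (seq (k - 1)).2, fun k => hFS _ _, fun n => ?_⟩
  have hseq : itComm g (fun k => F (seq (k - 1)).1 (seq (k - 1)).2) n = (seq n).1 := by
    induction n with
    | zero => rfl
    | succ n ih => simp only [itComm, ih, Nat.add_sub_cancel]; rfl
  exact hseq ▸ (seq n).2

namespace DoubleCoset

variable {G : Type*} [Group G] (Γ : Subgroup G)

def Succ (D E : Set G) : Prop :=
  ∃ x : G, ∃ γ ∈ Γ, D = doubleCoset x Γ Γ ∧ E = doubleCoset (x⁻¹ * γ * x) Γ Γ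

variable {Γ}

lemma doubleCoset_mul_eq {a b : G} (x : G) (ha : a ∈ Γ) (hb : b ∈ Γ) :
    doubleCoset (a * x * b) Γ Γ = doubleCoset x Γ Γ :=
  doubleCoset_eq_of_mem (mem_doubleCoset.2 ⟨a, ha, b, hb, rfl⟩)

lemma doubleCoset_eq_one_of_mem {γ : G} (hγ : γ ∈ Γ) : doubleCoset γ Γ Γ = doubleCoset 1 Γ Γ := by
  simpa using doubleCoset_mul_eq (1 : G) hγ Γ.one_mem

lemma exists_eq_of_succ {c : G} {E : Set G} (h : Succ Γ (doubleCoset c Γ Γ) E) :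
    ∃ δ ∈ Γ, E = doubleCoset (c⁻¹ * δ * c) Γ Γ := by
  obtain ⟨x, γ, hγ, hx, rfl⟩ := h
  obtain ⟨α, hα, β, hβ, rfl⟩ := mem_doubleCoset.1 (hx ▸ mem_doubleCoset_self Γ Γ x)
  refine ⟨α⁻¹ * γ * α, mul_mem (mul_mem (inv_mem hα) hγ) hα, ?_⟩
  rw [show (α * c * β)⁻¹ * γ * (α * c * β) = β⁻¹ * (c⁻¹ * (α⁻¹ * γ * α) * c) * β by group,
    doubleCoset_mul_eq _ (inv_mem hβ) hβ]

lemma finite_setOf_succ {c : G}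
    (hHecke : (QuotientGroup.mk '' doubleCoset c Γ Γ : Set (G ⧸ Γ)).Finite) :
    {E | Succ Γ (doubleCoset c Γ Γ) E}.Finite := by
  refine (hHecke.image fun q => doubleCoset (c⁻¹ * q.out) Γ Γ).subset ?_
  intro E hE
  obtain ⟨δ, hδ, rfl⟩ := exists_eq_of_succ hE
  refine ⟨QuotientGroup.mk (δ * c), ⟨δ * c, mem_doubleCoset.2 ⟨δ, hδ, 1, Γ.one_mem, by group⟩, rfl⟩,
    ?_⟩
  obtain ⟨β, hβ⟩ := QuotientGroup.mk_out_eq_mul Γ (δ * c)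
  simp only [hβ]
  rw [← doubleCoset_mul_eq (c⁻¹ * δ * c) Γ.one_mem β.2]
  group

lemma reflTransGen_succ_one {E : Set G}
    (h : Relation.ReflTransGen (Succ Γ) (doubleCoset 1 Γ Γ) E) : E = doubleCoset 1 Γ Γ := by
  induction h with
  | refl => rfl
  | tail _ hstep ih =>
    subst ih
    obtain ⟨δ, hδ, rfl⟩ := exists_eq_of_succ hstep
    simpa using doubleCoset_eq_one_of_mem hδ

lemma finite_setOf_reflTransGen_succ_of_mem {γ : G} (hγ : γ ∈ Γ) :
    {E | Relation.ReflTransGen (Succ Γ) (doubleCoset γ Γ Γ) E}.Finite := by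
  rw [doubleCoset_eq_one_of_mem hγ]
  exact (Set.finite_singleton _).subset fun E hE => reflTransGen_succ_one hE

lemma exists_mem_reachable_pcomm_infinite {c : G}
    (hHecke : (QuotientGroup.mk '' doubleCoset c Γ Γ : Set (G ⧸ Γ)).Finite)
    (hinf : {E | Relation.ReflTransGen (Succ Γ) (doubleCoset c Γ Γ) E}.Infinite) :
    ∃ δ ∈ Γ, {E | Relation.ReflTransGen (Succ Γ) (doubleCoset (pcomm c δ) Γ Γ) E}.Infinite := by
  obtain ⟨E, hE, hEinf⟩ := Relation.exists_rel_infinite_of_infinite (finite_setOf_succ hHecke) hinf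
  obtain ⟨δ, hδ, rfl⟩ := exists_eq_of_succ hE
  refine ⟨δ⁻¹, inv_mem hδ, ?_⟩
  have hpcomm : pcomm c δ⁻¹ = 1 * (c⁻¹ * δ * c) * δ⁻¹ := by simp [pcomm]
  rwa [hpcomm, doubleCoset_mul_eq _ Γ.one_mem (inv_mem hδ)]

end DoubleCoset

open DoubleCoset in
/-- For a Hecke pair `(G, Γ)` and `g ∈ G`, if for every sequence
`(γₖ) ⊆ Γ` there exists `N` with `[g, γ₁, …, γ_N] ∈ Γ`, then the set of double
cosets reachable from `ΓgΓ` by the successor relation is finite. -/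
theorem stmt_12 {G : Type*} [Group G] (Γ : Subgroup G)
    (hHecke : ∀ x : G,
      ((QuotientGroup.mk '' ((Γ : Set G) * {x} * (Γ : Set G))) : Set (G ⧸ Γ)).Finite)
    (g : G)
    (hN : ∀ γs : ℕ → G, (∀ k, γs k ∈ Γ) →
      ∃ N : ℕ, 1 ≤ N ∧ itComm g γs N ∈ Γ) :
    {E : Set G | Relation.ReflTransGen
      (fun D E : Set G => ∃ x : G, ∃ γ ∈ Γ,
        D = (Γ : Set G) * {x} * (Γ : Set G) ∧
        E = (Γ : Set G) * {x⁻¹ * γ * x} * (Γ : Set G))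
      ((Γ : Set G) * {g} * (Γ : Set G)) E}.Finite := by
  change {E | Relation.ReflTransGen (Succ Γ) (doubleCoset g Γ Γ) E}.Finite
  by_contra hinf
  obtain ⟨γs, hγs, hbad⟩ := exists_forall_itComm (Γ : Set G)
    (fun c => {E | Relation.ReflTransGen (Succ Γ) (doubleCoset c Γ Γ) E}.Infinite) hinf
    fun c hc => exists_mem_reachable_pcomm_infinite (hHecke c) hc
  obtain ⟨N, -, hmem⟩ := hN γs hγs
  exact hbad N (finite_setOf_reflTransGen_succ_of_mem hmem)
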